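/- Let 0 < q < p ≤ 1, n ≥ 2, and α, β ≥ 0. For f(t) = t², the (p,q)-Bernstein-Stancu operator satisfies S_{n,p,q}(t²; x) = (q[n]_{p,q}[n-1]_{p,q} x² + [n]_{p,q}(2α + p^{n-1}) x + α²)/([n]_{p,q} + β)² for all x ∈ [0,1]. -/

import Mathlib

open Finset Filter

noncomputable def pqInt (p q : ℝ) (n : ℕ) : ℝ := ∑ i ∈ Finset.range n, p ^ (n - 1 - i) * q ^ i

noncomputable def pqFact (p q : ℝ) (n : ℕ) : ℝ := ∏ j ∈ Finset.range n, pqInt p q (j + 1)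

noncomputable def pqChoose (p q : ℝ) (n k : ℕ) : ℝ :=
  pqFact p q n / (pqFact p q k * pqFact p q (n - k))

noncomputable def pqBasis (p q : ℝ) (n k : ℕ) (x : ℝ) : ℝ :=
  (1 / p ^ (n * (n - 1) / 2)) * pqChoose p q n k * p ^ (k * (k - 1) / 2) * x ^ k *
    ∏ s ∈ Finset.range (n - k), (p ^ s - q ^ s * x)

noncomputable def S (p q α β : ℝ) (n : ℕ) (f : ℝ → ℝ) (x : ℝ) : ℝ :=
  ∑ k ∈ Finset.range (n + 1),
    pqBasis p q n k x * f ((p ^ (n - k) * pqInt p q k + α) / (pqInt p q n + β))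

/-!
Up to the factor `p ^ (n * (n - 1) / 2)`, `S` averages `f` over the nodes
`p ^ (n - k) * [k]` against the weights `pqWeight`. The `(p, q)`-Pascal rule shows that these
weights sum to `p ^ (n * (n - 1) / 2)`, and the absorption identity
`C(n + 1, k + 1) * [k + 1] = [n + 1] * C(n, k)` turns a node-weighted sum at level `n + 1` into
a plain one at level `n`. Together with `p ^ (n - k) * [k + 1] = p ^ n + q * p ^ (n - k) * [k]`
this gives the first two moments of the nodes, and expanding `(node + α) ^ 2` finishes.
-/

lemma Finset.sum_range_succ_succ_of_split {M : Type*} [AddCommMonoid M] (f g h : ℕ → M)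
    (n : ℕ) (h_zero : f 0 = g 0) (h_last : f (n + 1) = h n)
    (h_succ : ∀ k < n, f (k + 1) = g (k + 1) + h k) :
    ∑ k ∈ range (n + 2), f k = ∑ k ∈ range (n + 1), (g k + h k) := by
  rw [sum_range_succ' f (n + 1), sum_range_succ (fun k => f (k + 1)) n, sum_add_distrib,
    sum_range_succ' g n, sum_range_succ h n,
    sum_congr rfl fun k hk => h_succ k (mem_range.mp hk), sum_add_distrib, h_zero, h_last]
  abel

section PQInt

variable {p q : ℝ}

lemma pqInt_zero : pqInt p q 0 = 0 := by simp [pqInt]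

lemma pqInt_succ (k : ℕ) : pqInt p q (k + 1) = p ^ k + q * pqInt p q k := by
  rw [pqInt, sum_range_succ', pqInt, mul_sum, add_comm]
  congr 1
  · simp
  · refine sum_congr rfl fun i _ => ?_
    rw [show k + 1 - 1 - (i + 1) = k - 1 - i by omega]
    ring

lemma pqInt_add (a b : ℕ) : pqInt p q (a + b) = p ^ a * pqInt p q b + q ^ b * pqInt p q a := by
  induction b with
  | zero => simp [pqInt_zero]
  | succ b ih =>
    rw [← add_assoc, pqInt_succ, ih, pqInt_succ]
    ring

lemma pqInt_succ_pos (hp : 0 < p) (hq : 0 < q) (k : ℕ) : 0 < pqInt p q (k + 1) :=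
  sum_pos (fun _ _ => by positivity) nonempty_range_add_one

lemma pqFact_pos (hp : 0 < p) (hq : 0 < q) (n : ℕ) : 0 < pqFact p q n :=
  prod_pos fun j _ => pqInt_succ_pos hp hq j

lemma pqFact_zero : pqFact p q 0 = 1 := prod_range_zero _

lemma pqFact_succ (n : ℕ) : pqFact p q (n + 1) = pqFact p q n * pqInt p q (n + 1) :=
  prod_range_succ _ n

lemma pqChoose_zero_right (hp : 0 < p) (hq : 0 < q) (n : ℕ) : pqChoose p q n 0 = 1 := by
  rw [pqChoose, Nat.sub_zero, pqFact_zero, one_mul,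
    div_self (pqFact_pos hp hq n).ne']

lemma pqChoose_self (hp : 0 < p) (hq : 0 < q) (n : ℕ) : pqChoose p q n n = 1 := by
  rw [pqChoose, Nat.sub_self, pqFact_zero, mul_one,
    div_self (pqFact_pos hp hq n).ne']

lemma pqChoose_succ_succ_mul_pqInt (hp : 0 < p) (hq : 0 < q) {n k : ℕ} (hk : k ≤ n) :
    pqChoose p q (n + 1) (k + 1) * pqInt p q (k + 1) = pqInt p q (n + 1) * pqChoose p q n k := by
  rw [pqChoose, pqChoose, show n + 1 - (k + 1) = n - k by omega, pqFact_succ n, pqFact_succ k]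
  have := (pqFact_pos hp hq k).ne'
  have := (pqFact_pos hp hq (n - k)).ne'
  have := (pqInt_succ_pos hp hq k).ne'
  field_simp

lemma pqChoose_succ_succ (hp : 0 < p) (hq : 0 < q) {n k : ℕ} (hk : k < n) :
    pqChoose p q (n + 1) (k + 1) =
      p ^ (k + 1) * pqChoose p q n (k + 1) + q ^ (n - k) * pqChoose p q n k := by
  obtain ⟨m, hm⟩ : ∃ m, n - k = m + 1 := ⟨n - k - 1, by omega⟩
  have h_int : pqInt p q (n + 1) =
      p ^ (k + 1) * pqInt p q (m + 1) + q ^ (m + 1) * pqInt p q (k + 1) := by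
    rw [← pqInt_add, ← hm]
    congr 1
    omega
  rw [pqChoose, pqChoose, pqChoose, show n + 1 - (k + 1) = m + 1 by omega,
    show n - (k + 1) = m by omega, hm, pqFact_succ n, pqFact_succ k, pqFact_succ m, h_int]
  have := (pqFact_pos hp hq n).ne'
  have := (pqFact_pos hp hq k).ne'
  have := (pqFact_pos hp hq m).ne'
  have := (pqInt_succ_pos hp hq k).ne'
  have := (pqInt_succ_pos hp hq m).ne'
  field_simp

end PQInt

noncomputable def pqWeight (p q : ℝ) (n k : ℕ) (x : ℝ) : ℝ :=
  pqChoose p q n k * p ^ (k * (k - 1) / 2) * x ^ k * ∏ s ∈ range (n - k), (p ^ s - q ^ s * x)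

noncomputable def pqNode (p q : ℝ) (n k : ℕ) : ℝ := p ^ (n - k) * pqInt p q k

section PQWeight

variable {p q : ℝ}

lemma S_eq_sum_pqWeight (α β : ℝ) (n : ℕ) (f : ℝ → ℝ) (x : ℝ) :
    S p q α β n f x = 1 / p ^ (n * (n - 1) / 2) *
      ∑ k ∈ range (n + 1),
        pqWeight p q n k x * f ((pqNode p q n k + α) / (pqInt p q n + β)) := by
  rw [S, mul_sum]
  refine sum_congr rfl fun k _ => ?_
  simp only [pqBasis, pqWeight, pqNode]
  ring

lemma pqWeight_succ_zero (hp : 0 < p) (hq : 0 < q) (n : ℕ) (x : ℝ) :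
    pqWeight p q (n + 1) 0 x = (p ^ n - q ^ n * x) * pqWeight p q n 0 x := by
  simp only [pqWeight, pqChoose_zero_right hp hq, Nat.sub_zero, prod_range_succ]
  ring

lemma pqWeight_succ_self (hp : 0 < p) (hq : 0 < q) (n : ℕ) (x : ℝ) :
    pqWeight p q (n + 1) (n + 1) x = p ^ n * x * pqWeight p q n n x := by
  simp only [pqWeight, pqChoose_self hp hq, Nat.sub_self, prod_range_zero, Nat.triangle_succ]
  ring

lemma pqWeight_succ_succ (hp : 0 < p) (hq : 0 < q) {n k : ℕ} (hk : k < n) (x : ℝ) :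
    pqWeight p q (n + 1) (k + 1) x =
      p ^ (k + 1) * (p ^ (n - (k + 1)) - q ^ (n - (k + 1)) * x) * pqWeight p q n (k + 1) x +
        q ^ (n - k) * p ^ k * x * pqWeight p q n k x := by
  obtain ⟨m, hm⟩ : ∃ m, n - k = m + 1 := ⟨n - k - 1, by omega⟩
  simp only [pqWeight, pqChoose_succ_succ hp hq hk, Nat.triangle_succ,
    show n + 1 - (k + 1) = m + 1 by omega, show n - (k + 1) = m by omega, hm, prod_range_succ]
  ring

theorem sum_pqWeight (hp : 0 < p) (hq : 0 < q) (n : ℕ) (x : ℝ) :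
    ∑ k ∈ range (n + 1), pqWeight p q n k x = p ^ (n * (n - 1) / 2) := by
  induction n with
  | zero => simp [pqWeight, pqChoose_self hp hq]
  | succ n ih =>
    rw [sum_range_succ_succ_of_split _
        (fun k => p ^ k * (p ^ (n - k) - q ^ (n - k) * x) * pqWeight p q n k x)
        (fun k => q ^ (n - k) * p ^ k * x * pqWeight p q n k x) n
        (by simp [pqWeight_succ_zero hp hq]) (by simp [pqWeight_succ_self hp hq])
        fun k hk => pqWeight_succ_succ hp hq hk x]
    have h_term : ∀ k ∈ range (n + 1), p ^ k * (p ^ (n - k) - q ^ (n - k) * x) *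
        pqWeight p q n k x + q ^ (n - k) * p ^ k * x * pqWeight p q n k x =
        p ^ n * pqWeight p q n k x := fun k hk => by
      rw [← pow_mul_pow_sub p (Nat.lt_succ_iff.mp (mem_range.mp hk))]
      ring
    rw [sum_congr rfl h_term, ← mul_sum, ih, Nat.triangle_succ, pow_add]
    ring

lemma pqWeight_succ_succ_mul_pqNode (hp : 0 < p) (hq : 0 < q) {n k : ℕ} (hk : k ≤ n) (x : ℝ) :
    pqWeight p q (n + 1) (k + 1) x * pqNode p q (n + 1) (k + 1) =
      pqInt p q (n + 1) * p ^ n * x * pqWeight p q n k x := by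
  rw [← pow_mul_pow_sub p hk]
  simp only [pqWeight, pqNode, Nat.triangle_succ, show n + 1 - (k + 1) = n - k by omega]
  linear_combination (p ^ (k * (k - 1) / 2) * p ^ k * x ^ (k + 1) * p ^ (n - k) *
    ∏ s ∈ range (n - k), (p ^ s - q ^ s * x)) * pqChoose_succ_succ_mul_pqInt hp hq hk

lemma pqNode_succ_succ {n k : ℕ} (hk : k ≤ n) :
    pqNode p q (n + 1) (k + 1) = p ^ n + q * pqNode p q n k := by
  rw [pqNode, pqNode, pqInt_succ, ← pow_mul_pow_sub p hk, show n + 1 - (k + 1) = n - k by omega]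
  ring

lemma sum_pqWeight_mul_pqNode_mul (hp : 0 < p) (hq : 0 < q) (n : ℕ) (x : ℝ) (g : ℕ → ℝ) :
    ∑ k ∈ range (n + 2), pqWeight p q (n + 1) k x * pqNode p q (n + 1) k * g k =
      pqInt p q (n + 1) * p ^ n * x * ∑ k ∈ range (n + 1), pqWeight p q n k x * g (k + 1) := by
  rw [sum_range_succ', mul_sum]
  simp only [pqNode, pqInt_zero, mul_zero, zero_mul, add_zero]
  refine sum_congr rfl fun k hk => ?_
  rw [← pqNode, pqWeight_succ_succ_mul_pqNode hp hq (Nat.lt_succ_iff.mp (mem_range.mp hk))]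
  ring

theorem sum_pqWeight_mul_pqNode (hp : 0 < p) (hq : 0 < q) (n : ℕ) (x : ℝ) :
    ∑ k ∈ range (n + 1), pqWeight p q n k x * pqNode p q n k =
      pqInt p q n * x * p ^ (n * (n - 1) / 2) := by
  cases n with
  | zero => simp [pqNode, pqInt_zero]
  | succ n =>
    have := sum_pqWeight_mul_pqNode_mul hp hq n x fun _ => 1
    simp only [mul_one] at this
    rw [this, sum_pqWeight hp hq, Nat.triangle_succ, pow_add]
    ring

theorem sum_pqWeight_mul_pqNode_sq (hp : 0 < p) (hq : 0 < q) (n : ℕ) (x : ℝ) :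
    ∑ k ∈ range (n + 1), pqWeight p q n k x * pqNode p q n k ^ 2 =
      (q * pqInt p q n * pqInt p q (n - 1) * x ^ 2 + p ^ (n - 1) * pqInt p q n * x) *
        p ^ (n * (n - 1) / 2) := by
  cases n with
  | zero => simp [pqNode, pqInt_zero]
  | succ n =>
    rw [Nat.triangle_succ, pow_add]
    simp only [sq, ← mul_assoc, sum_pqWeight_mul_pqNode_mul hp hq, Nat.add_sub_cancel]
    have h_node : ∀ k ∈ range (n + 1), pqWeight p q n k x * pqNode p q (n + 1) (k + 1) =
        p ^ n * pqWeight p q n k x + q * (pqWeight p q n k x * pqNode p q n k) := fun k hk => by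
      rw [pqNode_succ_succ (Nat.lt_succ_iff.mp (mem_range.mp hk))]
      ring
    rw [sum_congr rfl h_node, sum_add_distrib, ← mul_sum, ← mul_sum, sum_pqWeight hp hq,
      sum_pqWeight_mul_pqNode hp hq]
    ring

end PQWeight

theorem S_sq_general (p q α β : ℝ) (hq : 0 < q) (hqp : q < p) (n : ℕ) (x : ℝ) :
    S p q α β n (fun t => t ^ 2) x =
      (q * pqInt p q n * pqInt p q (n - 1) * x ^ 2 +
        pqInt p q n * (2 * α + p ^ (n - 1)) * x + α ^ 2) / (pqInt p q n + β) ^ 2 := by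
  have hp : 0 < p := hq.trans hqp
  have h_expand : ∀ k ∈ range (n + 1),
      pqWeight p q n k x * ((pqNode p q n k + α) / (pqInt p q n + β)) ^ 2 =
        (pqWeight p q n k x * pqNode p q n k ^ 2 + 2 * α * (pqWeight p q n k x * pqNode p q n k) +
          α ^ 2 * pqWeight p q n k x) / (pqInt p q n + β) ^ 2 := fun k _ => by
    rw [div_pow]
    ring
  rw [S_eq_sum_pqWeight, sum_congr rfl h_expand, ← sum_div, sum_add_distrib, sum_add_distrib,
    ← mul_sum, ← mul_sum, sum_pqWeight_mul_pqNode_sq hp hq, sum_pqWeight_mul_pqNode hp hq,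
    sum_pqWeight hp hq, mul_div_assoc', one_div_mul_eq_div]
  congr 1
  field_simp
  ring

theorem S_sq (p q α β : ℝ) (hq : 0 < q) (hqp : q < p) (hp : p ≤ 1)
    (hα : 0 ≤ α) (hβ : 0 ≤ β) (n : ℕ) (hn : 2 ≤ n)
    (x : ℝ) (hx : x ∈ Set.Icc (0 : ℝ) 1) :
    S p q α β n (fun t => t ^ 2) x =
      (q * pqInt p q n * pqInt p q (n - 1) * x ^ 2 +
        pqInt p q n * (2 * α + p ^ (n - 1)) * x + α ^ 2) / (pqInt p q n + β) ^ 2 :=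
  S_sq_general p q α β hq hqp n x
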